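/- Let X be a finite nonempty set and let α, β, 𝒫 be permutations of X such that: α and β are fixed-point-free involutions, α and β commute, α x ≠ β x for every x ∈ X (so the Klein four-group K = {1, α, β, αβ} acts freely on X); α ∘ 𝒫 = 𝒫⁻¹ ∘ α; the subgroup generated by α, β and 𝒫 acts transitively on X; and 𝒫 is basic with respect to α, i.e. for no x ∈ X and no integer k does 𝒫^k x = α x. Then the dual tuple also satisfies the map axioms with the roles of α and β interchanged: setting 𝒬 = 𝒫 ∘ α ∘ β, one has β ∘ 𝒬 = 𝒬⁻¹ ∘ β, the subgroup generated by β, α and 𝒬 equals the subgroup generated by α, β and 𝒫 and hence acts transitively on X, and for no x ∈ X and no integer k does 𝒬^k x = β x. -/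
import Mathlib


/-- The dual of a combinatorial map satisfies the map axioms with the roles of
`α` and `β` interchanged. -/
theorem dual_map_axioms {X : Type*} [Fintype X] [Nonempty X]
    (α β P : Equiv.Perm X)
    (hα2 : α * α = 1) (hαfree : ∀ x : X, α x ≠ x)
    (hβ2 : β * β = 1) (hβfree : ∀ x : X, β x ≠ x)
    (hcomm : α * β = β * α)
    (hαβ : ∀ x : X, α x ≠ β x)
    (hPα : α * P = P⁻¹ * α)
    (htrans : ∀ x y : X, ∃ g ∈ Subgroup.closure ({α, β, P} : Set (Equiv.Perm X)), g x = y)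
    (hbasic : ∀ (x : X) (k : ℤ), (P ^ k) x ≠ α x) :
    β * (P * α * β) = (P * α * β)⁻¹ * β ∧
    Subgroup.closure ({β, α, P * α * β} : Set (Equiv.Perm X)) =
      Subgroup.closure ({α, β, P} : Set (Equiv.Perm X)) ∧
    (∀ x y : X, ∃ g ∈ Subgroup.closure ({β, α, P * α * β} : Set (Equiv.Perm X)), g x = y) ∧
    (∀ (x : X) (k : ℤ), ((P * α * β) ^ k) x ≠ β x) := by
  have hαi : α⁻¹ = α := inv_eq_of_mul_eq_one_right hα2
  have hβi : β⁻¹ = β := inv_eq_of_mul_eq_one_right hβ2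
  have hPα' : P * α = α * P⁻¹ := by
    calc P * α = (α * α) * (P * α) := by rw [hα2, one_mul]
      _ = α * ((α * P) * α) := by group
      _ = α * ((P⁻¹ * α) * α) := by rw [hPα]
      _ = α * P⁻¹ * (α * α) := by group
      _ = α * P⁻¹ := by rw [hα2, mul_one]
  -- Part 1
  have h1 : β * (P * α * β) = (P * α * β)⁻¹ * β := by
    calc β * (P * α * β) = β * ((P * α) * β) := by group
      _ = β * ((α * P⁻¹) * β) := by rw [hPα']
      _ = (P * α * β)⁻¹ * β := by
          rw [mul_inv_rev, mul_inv_rev, hαi, hβi]; group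
  -- Part 2
  have hc : Subgroup.closure ({β, α, P * α * β} : Set (Equiv.Perm X)) =
      Subgroup.closure ({α, β, P} : Set (Equiv.Perm X)) := by
    apply le_antisymm
    · rw [Subgroup.closure_le]
      have hA : α ∈ Subgroup.closure ({α, β, P} : Set (Equiv.Perm X)) :=
        Subgroup.subset_closure (by simp)
      have hB : β ∈ Subgroup.closure ({α, β, P} : Set (Equiv.Perm X)) :=
        Subgroup.subset_closure (by simp)
      have hP : P ∈ Subgroup.closure ({α, β, P} : Set (Equiv.Perm X)) :=
        Subgroup.subset_closure (by simp)
      rintro g hg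
      simp only [Set.mem_insert_iff, Set.mem_singleton_iff] at hg
      rcases hg with rfl | rfl | rfl
      · exact hB
      · exact hA
      · exact mul_mem (mul_mem hP hA) hB
    · rw [Subgroup.closure_le]
      have hA : α ∈ Subgroup.closure ({β, α, P * α * β} : Set (Equiv.Perm X)) :=
        Subgroup.subset_closure (by simp)
      have hB : β ∈ Subgroup.closure ({β, α, P * α * β} : Set (Equiv.Perm X)) :=
        Subgroup.subset_closure (by simp)
      have hQ : P * α * β ∈ Subgroup.closure ({β, α, P * α * β} : Set (Equiv.Perm X)) :=
        Subgroup.subset_closure (by simp)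
      have hP : P ∈ Subgroup.closure ({β, α, P * α * β} : Set (Equiv.Perm X)) := by
        have hid : (P * α * β) * β * α = P := by
          calc (P * α * β) * β * α = P * α * (β * β) * α := by group
            _ = P * (α * α) := by rw [hβ2]; group
            _ = P := by rw [hα2, mul_one]
        have h := mul_mem (mul_mem hQ hB) hA
        rwa [hid] at h
      rintro g hg
      simp only [Set.mem_insert_iff, Set.mem_singleton_iff] at hg
      rcases hg with rfl | rfl | rfl
      · exact hA
      · exact hB
      · exact hP
  refine ⟨h1, hc, ?_, ?_⟩
  -- Part 3
  · intro x y
    obtain ⟨g, hg, hgx⟩ := htrans x y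
    exact ⟨g, by rw [hc]; exact hg, hgx⟩
  -- Part 4
  · intro x k hk
    set Q : Equiv.Perm X := P * α * β with hQdef
    -- conjugation relation
    have hbase : β * Q * β⁻¹ = Q⁻¹ := by
      rw [hβi]
      calc β * Q * β = (β * Q) * β := by group
        _ = (Q⁻¹ * β) * β := by rw [h1]
        _ = Q⁻¹ * (β * β) := by group
        _ = Q⁻¹ := by rw [hβ2, mul_one]
    have hconj : ∀ n : ℤ, β * Q ^ n = Q ^ (-n) * β := by
      intro n
      calc β * Q ^ n = (β * Q ^ n * β⁻¹) * β := by group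
        _ = ((β * Q * β⁻¹) ^ n) * β := by rw [conj_zpow]
        _ = ((Q⁻¹) ^ n) * β := by rw [hbase]
        _ = Q ^ (-n) * β := by rw [inv_zpow, ← zpow_neg]
    have happ : ∀ (n : ℤ) (y : X), β ((Q ^ n) y) = (Q ^ (-n)) (β y) := by
      intro n y
      have h := congrArg (fun f : Equiv.Perm X => f y) (hconj n)
      simpa [Equiv.Perm.mul_apply] using h
    have hββ : ∀ z : X, β (β z) = z := by
      intro z
      have h := congrArg (fun f : Equiv.Perm X => f z) hβ2
      simpa [Equiv.Perm.mul_apply] using h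
    rcases Int.even_or_odd k with ⟨m, hm⟩ | ⟨m, hm⟩
    · -- k = m + m
      have e1 : β ((Q ^ m) x) = (Q ^ (-m)) (β x) := happ m x
      rw [← hk] at e1
      have e2 : (Q ^ (-m)) ((Q ^ k) x) = (Q ^ m) x := by
        have hh : -m + k = m := by omega
        rw [← Equiv.Perm.mul_apply, ← zpow_add, hh]
      rw [e2] at e1
      exact hβfree _ e1
    · -- k = 2*m + 1
      have e1 : β ((Q ^ (m + 1)) x) = (Q ^ (-(m + 1))) (β x) := happ (m + 1) x
      rw [← hk] at e1
      have e2 : (Q ^ (-(m + 1))) ((Q ^ k) x) = (Q ^ m) x := by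
        have hh : -(m + 1) + k = m := by omega
        rw [← Equiv.Perm.mul_apply, ← zpow_add, hh]
      rw [e2] at e1
      set y : X := (Q ^ m) x with hy
      have e3 : (Q ^ (m + 1)) x = Q y := by
        rw [show m + 1 = 1 + m by ring, zpow_add, zpow_one, Equiv.Perm.mul_apply]
      rw [e3] at e1
      have e4 : Q y = β y := by
        have h := congrArg β e1
        rwa [hββ] at h
      have e5 : P (α (β y)) = β y := by
        have : Q y = P (α (β y)) := by
          rw [hQdef]; simp [Equiv.Perm.mul_apply]
        rw [← this, e4]
      have e6 : (P ^ (-1 : ℤ)) (β y) = α (β y) := by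
        have h7 : α (β y) = P⁻¹ (β y) := by
          have h := congrArg (fun z => P⁻¹ z) e5
          simpa using h
        rw [zpow_neg, zpow_one, h7]
      exact hbasic (β y) (-1) e6
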